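/- arXiv:2004.03582 — 4 statements merged into one kernel-verified Lean document; each statement's English description precedes it below -/
import Mathlib

section
/- Equality holds in the inequality H(∑_k ρ_k) ≤ ∑_k H(ρ_k) + S({Tr ρ_k}) if the supports of the positive trace-class operators ρ_k are mutually orthogonal. -/
/-! Orthogonality of the `ρ k` gives `η(∑ ρ k) = ∑ η(ρ k)`: since `(a + c)ⁿ⁺¹ = aⁿ⁺¹ + cⁿ⁺¹`
when `ac = ca = 0`, this holds for polynomials vanishing at `0`, and Weierstrass approximation
passes it to `η`. Traces are additive on positive operators, so the claim becomes a rearrangement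
of truncated differences in `[0, ∞]`. The rearrangement is exact because `η(Tr ρ) ≤ Tr η(ρ)`
(the spectrum of `ρ` lies in `[0, Tr ρ]` since `‖ρ‖ ≤ Tr ρ`, and there `η(x) ≥ -x log Tr ρ`)
and `η(∑ tₖ) ≤ ∑ η(tₖ)`. -/

open scoped ENNReal
open ContinuousLinearMap

noncomputable section

/-- η(x) = −x ln x (with η(0) = 0, since Real.log 0 = 0). -/
def eta (x : ℝ) : ℝ := - x * Real.log x

/-- The binary entropy h₂(p) = η(p) + η(1−p). -/
def binEnt (p : ℝ) : ℝ := eta p + eta (1 - p)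

/-- g(x) = (1+x) h₂(x/(1+x)). -/
def gAFW (x : ℝ) : ℝ := (1 + x) * binEnt (x / (1 + x))

/-- Extended Shannon entropy S({x_k}) = ∑_k η(x_k) − η(∑_k x_k), as a value in [0,∞]
(for nonnegative sequences with ∑ x_k ≤ 1 all the terms η(x_k) are nonnegative). -/
def shEntExt (x : ℕ → ℝ) : ℝ≥0∞ :=
  (∑' k, ENNReal.ofReal (eta (x k))) - ENNReal.ofReal (eta (∑' k, x k))

variable {E F : Type*} [NormedAddCommGroup E] [InnerProductSpace ℂ E] [CompleteSpace E]
  [NormedAddCommGroup F] [InnerProductSpace ℂ F] [CompleteSpace F]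

/-- The trace of a (positive) operator computed w.r.t. a Hilbert basis, with values in [0,∞].
For positive operators this is basis-independent and equals the trace. -/
def traceWith {ι : Type*} (b : HilbertBasis ι ℂ E) (T : E →L[ℂ] E) : ℝ≥0∞ :=
  ∑' i, ENNReal.ofReal ((inner ℂ (b i) (T (b i)) : ℂ)).re

/-- The von Neumann entropy H(ρ) = Tr η(ρ), via the continuous functional calculus. -/
def vnEnt {ι : Type*} (b : HilbertBasis ι ℂ E) (ρ : E →L[ℂ] E) : ℝ≥0∞ :=
  traceWith b (cfc eta ρ)

/-- The homogeneous extension of the entropy, H(ρ) = Tr η(ρ) − η(Tr ρ),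
for positive operators in the unit ball of the trace class. -/
def vnEntExt {ι : Type*} (b : HilbertBasis ι ℂ E) (ρ : E →L[ℂ] E) : ℝ≥0∞ :=
  vnEnt b ρ - ENNReal.ofReal (eta (traceWith b ρ).toReal)

/-- The rank-one operator |x⟩⟨y|. -/
def rankOne (x y : E) : E →L[ℂ] E := (innerSL ℂ y).smulRight x

/-- A state (density operator): a positive operator of unit trace. -/
def IsState {ι : Type*} (b : HilbertBasis ι ℂ E) (ρ : E →L[ℂ] E) : Prop :=
  ρ.IsPositive ∧ traceWith b ρ = 1

open Filter Topology
open scoped Polynomial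
open scoped InnerProductSpace

theorem Real.negMulLog_add_le {x y : ℝ} (hx : 0 ≤ x) (hy : 0 ≤ y) :
    negMulLog (x + y) ≤ negMulLog x + negMulLog y := by
  have mul_log_le {u : ℝ} (hu : 0 ≤ u) (huv : u ≤ x + y) : u * log u ≤ u * log (x + y) := by
    rcases hu.eq_or_lt with rfl | hu
    · simp
    · exact mul_le_mul_of_nonneg_left (log_le_log hu huv) hu.le
  simp only [negMulLog, neg_mul]
  nlinarith [mul_log_le hx (by linarith), mul_log_le hy (by linarith)]

theorem Real.negMulLog_sum_le {ι : Type*} (s : Finset ι) {t : ι → ℝ} (ht : ∀ i ∈ s, 0 ≤ t i) :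
    negMulLog (∑ i ∈ s, t i) ≤ ∑ i ∈ s, negMulLog (t i) :=
  Finset.le_sum_of_subadditive_on_pred _ (0 ≤ ·) negMulLog_zero.le
    (fun _ _ => negMulLog_add_le) (fun _ _ => add_nonneg) t ht

theorem add_pow_succ_of_mul_eq_zero {R : Type*} [Semiring R] {a c : R} (hac : a * c = 0)
    (hca : c * a = 0) (n : ℕ) : (a + c) ^ (n + 1) = a ^ (n + 1) + c ^ (n + 1) := by
  induction n with
  | zero => simp
  | succ n ih =>
    have hac' : a ^ (n + 1) * c = 0 := by rw [pow_succ, mul_assoc, hac, mul_zero]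
    have hca' : c ^ (n + 1) * a = 0 := by rw [pow_succ, mul_assoc, hca, mul_zero]
    rw [pow_succ (a + c), ih, add_mul, mul_add, mul_add, hac', hca', add_zero, zero_add,
      ← pow_succ, ← pow_succ]

theorem Polynomial.aeval_add_of_mul_eq_zero {R S : Type*} [CommSemiring R] [Semiring S]
    [Algebra R S] {a c : S} (hac : a * c = 0) (hca : c * a = 0) (p : R[X]) :
    aeval (a + c) p + algebraMap R S (p.coeff 0) = aeval a p + aeval c p := by
  induction p using Polynomial.induction_on with
  | C r => simp
  | add p q hp hq =>
    simp only [map_add, coeff_add]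
    rw [add_add_add_comm, hp, hq, add_add_add_comm]
  | monomial m r _ =>
    simp [add_pow_succ_of_mul_eq_zero hac hca, coeff_X_pow, mul_add]

theorem exists_polynomial_tendstoUniformlyOn {f : ℝ → ℝ} {a b : ℝ}
    (hf : ContinuousOn f (Set.Icc a b)) :
    ∃ p : ℕ → ℝ[X], TendstoUniformlyOn (fun n => (p n).eval) f atTop (Set.Icc a b) := by
  choose p hp using fun n : ℕ =>
    exists_polynomial_near_of_continuousOn a b f hf (1 / (n + 1)) Nat.one_div_pos_of_nat
  refine ⟨p, Metric.tendstoUniformlyOn_iff.mpr fun ε hε => ?_⟩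
  obtain ⟨N, hN⟩ := exists_nat_one_div_lt hε
  filter_upwards [eventually_ge_atTop N] with n hn x hx
  rw [Real.dist_eq, abs_sub_comm]
  exact (hp n x hx).trans_le (Nat.one_div_le_one_div hn) |>.trans hN

section OrthogonalSum

variable {A : Type*} [CStarAlgebra A]

theorem cfc_add_of_mul_eq_zero {f : ℝ → ℝ} (hf : Continuous f) (hf0 : f 0 = 0) {a c : A}
    (ha : IsSelfAdjoint a) (hc : IsSelfAdjoint c) (hac : a * c = 0) :
    cfc f (a + c) = cfc f a + cfc f c := by
  have hca : c * a = 0 := by simpa [ha.star_eq, hc.star_eq] using congrArg star hac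
  obtain ⟨R, hR⟩ := (Metric.isBounded_iff_subset_closedBall 0).mp
    ((Bornology.isBounded_singleton (x := (0 : ℝ))).union <| (spectrum.isBounded a).union <|
      (spectrum.isBounded c).union (spectrum.isBounded (a + c)))
  simp only [Real.closedBall_eq_Icc, zero_sub, zero_add, Set.union_subset_iff,
    Set.singleton_subset_iff] at hR
  obtain ⟨hR0, hRa, hRc, hRac⟩ := hR
  obtain ⟨p, hp⟩ := exists_polynomial_tendstoUniformlyOn (a := -R) (b := R) hf.continuousOn
  have lim_cfc {x : A} (hx : spectrum ℝ x ⊆ Set.Icc (-R) R) :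
      Tendsto (fun n => cfc (p n).eval x) atTop (𝓝 (cfc f x)) :=
    tendsto_cfc_fun (hp.mono hx) (.of_forall fun n => (p n).continuousOn)
  have lim_const : Tendsto (fun n => algebraMap ℝ A ((p n).eval 0)) atTop (𝓝 0) := by
    simpa [hf0, Function.comp_def] using
      ((continuous_algebraMap ℝ A).tendsto _).comp (hp.tendsto_at hR0)
  have poly_eq (n : ℕ) : cfc (p n).eval (a + c) + algebraMap ℝ A ((p n).eval 0) =
      cfc (p n).eval a + cfc (p n).eval c := by
    rw [cfc_polynomial _ _ (ha.add hc), cfc_polynomial _ _ ha, cfc_polynomial _ _ hc,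
      ← Polynomial.coeff_zero_eq_eval_zero]
    exact Polynomial.aeval_add_of_mul_eq_zero hac hca _
  refine tendsto_nhds_unique (by simpa using (lim_cfc hRac).add lim_const) ?_
  simpa only [poly_eq] using (lim_cfc hRa).add (lim_cfc hRc)

theorem cfc_sum_of_mul_eq_zero {ι : Type*} {f : ℝ → ℝ} (hf : Continuous f) (hf0 : f 0 = 0)
    {a : ι → A} (ha : ∀ k, IsSelfAdjoint (a k)) (horth : Pairwise fun k j => a k * a j = 0)
    (s : Finset ι) : cfc f (∑ k ∈ s, a k) = ∑ k ∈ s, cfc f (a k) := by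
  induction s using Finset.cons_induction with
  | empty => simp [hf0]
  | cons j s hj ih =>
    have hj_orth : a j * ∑ k ∈ s, a k = 0 := by
      rw [Finset.mul_sum]
      exact Finset.sum_eq_zero fun k hk => horth (ne_of_mem_of_not_mem hk hj).symm
    rw [Finset.sum_cons, Finset.sum_cons, cfc_add_of_mul_eq_zero hf hf0 (ha j)
      (isSelfAdjoint_sum s fun k _ => ha k) hj_orth, ih]

end OrthogonalSum

@[fun_prop]
theorem continuous_eta : Continuous eta :=
  Real.continuous_negMulLog

section Trace

variable {H : Type*} [NormedAddCommGroup H] [InnerProductSpace ℂ H] {ι : Type*}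
  (b : HilbertBasis ι ℂ H)

theorem traceWith_sum {κ : Type*} (s : Finset κ) {T : κ → H →L[ℂ] H} (hT : ∀ k ∈ s, 0 ≤ T k) :
    traceWith b (∑ k ∈ s, T k) = ∑ k ∈ s, traceWith b (T k) := by
  simp only [traceWith, sum_apply, inner_sum, Complex.re_sum]
  rw [← Summable.tsum_finsetSum fun _ _ => ENNReal.summable]
  refine tsum_congr fun i => ?_
  exact ENNReal.ofReal_sum_of_nonneg fun k hk =>
    ((T k).nonneg_iff_isPositive.mp (hT k hk)).re_inner_nonneg_right _

theorem traceWith_mono {S T : H →L[ℂ] H} (h : S ≤ T) : traceWith b S ≤ traceWith b T :=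
  ENNReal.tsum_le_tsum fun i => ENNReal.ofReal_le_ofReal <| by
    simpa [inner_sub_right] using h.re_inner_nonneg_right (b i)

theorem traceWith_smul {c : ℝ} (hc : 0 ≤ c) (T : H →L[ℂ] H) :
    traceWith b (c • T) = ENNReal.ofReal c * traceWith b T := by
  simp only [traceWith, ← ENNReal.tsum_mul_left, ← ENNReal.ofReal_mul hc]
  congr! 2 with i
  simp

theorem ofReal_sq_norm_eq_tsum (x : H) :
    ENNReal.ofReal (‖x‖ ^ 2) = ∑' i, ENNReal.ofReal (‖⟪b i, x⟫_ℂ‖ ^ 2) := by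
  have parseval := lp.hasSum_norm (p := 2) (by norm_num) (b.repr x)
  simp only [b.repr_apply_apply, LinearIsometryEquiv.norm_map, ENNReal.toReal_ofNat,
    Real.rpow_two] at parseval
  rw [← parseval.tsum_eq, ENNReal.ofReal_tsum_of_nonneg (fun _ => by positivity) parseval.summable]

variable [CompleteSpace H]

theorem traceWith_star_mul_self (s : H →L[ℂ] H) :
    traceWith b (star s * s) = ∑' i, ENNReal.ofReal (‖s (b i)‖ ^ 2) := by
  simp only [traceWith, ContinuousLinearMap.star_eq_adjoint,
    ContinuousLinearMap.apply_norm_sq_eq_inner_adjoint_right]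
  rfl

theorem ofReal_sq_norm_apply_le (s : H →L[ℂ] H) (x : H) :
    ENNReal.ofReal (‖s x‖ ^ 2) ≤ traceWith b (s * star s) * ENNReal.ofReal (‖x‖ ^ 2) := by
  have := traceWith_star_mul_self b (star s)
  rw [star_star] at this
  rw [this, ← ENNReal.tsum_mul_right, ofReal_sq_norm_eq_tsum b]
  refine ENNReal.tsum_le_tsum fun i => ?_
  rw [← ENNReal.ofReal_mul (by positivity), ← mul_pow]
  gcongr
  calc ‖⟪b i, s x⟫_ℂ‖ = ‖⟪star s (b i), x⟫_ℂ‖ := by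
        rw [ContinuousLinearMap.star_eq_adjoint, ContinuousLinearMap.adjoint_inner_left]
    _ ≤ ‖star s (b i)‖ * ‖x‖ := norm_inner_le_norm _ _

theorem norm_le_toReal_traceWith {ρ : H →L[ℂ] H} (hρ : 0 ≤ ρ) (hfin : traceWith b ρ ≠ ⊤) :
    ‖ρ‖ ≤ (traceWith b ρ).toReal := by
  obtain ⟨s, rfl⟩ := CStarAlgebra.nonneg_iff_eq_star_mul_self.mp hρ
  set t := (traceWith b (star s * s)).toReal
  have ht : 0 ≤ t := ENNReal.toReal_nonneg
  have hsq (x : H) : ‖star s x‖ ^ 2 ≤ (√t * ‖x‖) ^ 2 := by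
    have := ofReal_sq_norm_apply_le b (star s) x
    rwa [star_star, ← ENNReal.ofReal_toReal hfin, ← ENNReal.ofReal_mul ht,
      ENNReal.ofReal_le_ofReal_iff (by positivity), ← Real.sq_sqrt ht, ← mul_pow] at this
  have hnorm : ‖star s‖ ≤ √t := (star s).opNorm_le_bound (Real.sqrt_nonneg t) fun x =>
    (pow_le_pow_iff_left₀ (norm_nonneg _) (by positivity) two_ne_zero).mp (hsq x)
  calc ‖star s * s‖ = ‖star s‖ * ‖star s‖ := by rw [← CStarRing.norm_self_mul_star, star_star]
    _ ≤ √t * √t := mul_self_le_mul_self (norm_nonneg _) hnorm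
    _ = t := Real.mul_self_sqrt ht

theorem spectrum_subset_Icc_traceWith {ρ : H →L[ℂ] H} (hρ : 0 ≤ ρ) (hfin : traceWith b ρ ≠ ⊤) :
    spectrum ℝ ρ ⊆ Set.Icc 0 (traceWith b ρ).toReal := fun _ hx =>
  ⟨spectrum_nonneg_of_nonneg hρ hx, (le_algebraMap_iff_spectrum_le (IsSelfAdjoint.of_nonneg hρ)).mp
    ((CStarAlgebra.norm_le_iff_le_algebraMap ρ ENNReal.toReal_nonneg hρ).mp
      (norm_le_toReal_traceWith b hρ hfin)) _ hx⟩

theorem spectrum_subset_Icc_of_traceWith_le_one {ρ : H →L[ℂ] H} (hρ : 0 ≤ ρ)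
    (h1 : traceWith b ρ ≤ 1) : spectrum ℝ ρ ⊆ Set.Icc 0 1 :=
  (spectrum_subset_Icc_traceWith b hρ (ne_top_of_le_ne_top ENNReal.one_ne_top h1)).trans <|
    Set.Icc_subset_Icc_right (ENNReal.toReal_le_of_le_ofReal zero_le_one (by simpa using h1))

theorem cfc_eta_nonneg {ρ : H →L[ℂ] H} (hρ : 0 ≤ ρ) (h1 : traceWith b ρ ≤ 1) :
    0 ≤ cfc eta ρ :=
  cfc_nonneg fun _ hx => Real.negMulLog_nonneg
    (spectrum_subset_Icc_of_traceWith_le_one b hρ h1 hx).1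
    (spectrum_subset_Icc_of_traceWith_le_one b hρ h1 hx).2

theorem ofReal_eta_traceWith_le_vnEnt {ρ : H →L[ℂ] H} (hρ : 0 ≤ ρ) (h1 : traceWith b ρ ≤ 1) :
    ENNReal.ofReal (eta (traceWith b ρ).toReal) ≤ vnEnt b ρ := by
  have hfin : traceWith b ρ ≠ ⊤ := ne_top_of_le_ne_top ENNReal.one_ne_top h1
  set t := (traceWith b ρ).toReal with ht
  have ht1 : t ≤ 1 := ENNReal.toReal_le_of_le_ofReal zero_le_one (by simpa using h1)
  rcases (show 0 ≤ t from ENNReal.toReal_nonneg).eq_or_lt with ht0 | ht0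
  · simp [← ht0, eta]
  have hc : 0 ≤ -Real.log t := neg_nonneg.mpr (Real.log_nonpos ht0.le ht1)
  have hle : (-Real.log t) • ρ ≤ cfc eta ρ := by
    rw [← cfc_const_mul_id _ ρ (IsSelfAdjoint.of_nonneg hρ)]
    refine cfc_mono fun x hx => ?_
    obtain ⟨hx0, hxt⟩ := spectrum_subset_Icc_traceWith b hρ hfin hx
    rcases hx0.eq_or_lt with rfl | hx0
    · simp [eta]
    simp only [eta]
    nlinarith [Real.log_le_log hx0 hxt]
  calc ENNReal.ofReal (eta t) = ENNReal.ofReal (-Real.log t) * traceWith b ρ := by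
        conv_rhs => rw [← ENNReal.ofReal_toReal hfin, ← ENNReal.ofReal_mul hc]
        simp only [eta, ← ht]
        ring_nf
    _ = traceWith b ((-Real.log t) • ρ) := (traceWith_smul b hc ρ).symm
    _ ≤ vnEnt b ρ := traceWith_mono b hle

end Trace

theorem ENNReal.sum_sub_eq_sum_tsub_add_tsub {ι : Type*} (s : Finset ι) {f g : ι → ℝ≥0∞}
    {c : ℝ≥0∞}
    (hgf : ∀ k ∈ s, g k ≤ f k) (hg : ∑ k ∈ s, g k ≠ ⊤) (hc : c ≤ ∑ k ∈ s, g k) :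
    ∑ k ∈ s, f k - c = ∑ k ∈ s, (f k - g k) + (∑ k ∈ s, g k - c) := by
  have hsub : ∑ k ∈ s, (f k - g k) = ∑ k ∈ s, f k - ∑ k ∈ s, g k := by
    refine ENNReal.eq_sub_of_add_eq hg ?_
    rw [← Finset.sum_add_distrib]
    exact Finset.sum_congr rfl fun k hk => tsub_add_cancel_of_le (hgf k hk)
  rw [hsub, tsub_add_tsub_cancel (Finset.sum_le_sum hgf) hc]

theorem vnEntExt_sum_eq_of_orthogonal_general {A : Type*} [NormedAddCommGroup A]
    [InnerProductSpace ℂ A] [CompleteSpace A] (b : HilbertBasis ℕ ℂ A) {n : ℕ}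
    (ρ : Fin n → (A →L[ℂ] A))
    (hρ : ∀ k, (ρ k).IsPositive) (hρ1 : ∀ k, traceWith b (ρ k) ≤ 1)
    (horth : ∀ k j, k ≠ j → (ρ k) ∘L (ρ j) = 0) :
    vnEntExt b (∑ k, ρ k) =
      ∑ k, vnEntExt b (ρ k) +
        ((∑ k, ENNReal.ofReal (eta ((traceWith b (ρ k)).toReal))) -
          ENNReal.ofReal (eta (∑ k, (traceWith b (ρ k)).toReal))) := by
  have hpos k : 0 ≤ ρ k := (ρ k).nonneg_iff_isPositive.mpr (hρ k)
  have htrace : traceWith b (∑ k, ρ k) = ∑ k, traceWith b (ρ k) :=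
    traceWith_sum b _ fun k _ => hpos k
  have hentropy : vnEnt b (∑ k, ρ k) = ∑ k, vnEnt b (ρ k) := by
    rw [vnEnt, cfc_sum_of_mul_eq_zero continuous_eta Real.negMulLog_zero
      (fun k => (hpos k).isSelfAdjoint) horth]
    exact traceWith_sum b _ fun k _ => cfc_eta_nonneg b (hpos k) (hρ1 k)
  have hsubadd : ENNReal.ofReal (eta (∑ k, (traceWith b (ρ k)).toReal)) ≤
      ∑ k, ENNReal.ofReal (eta (traceWith b (ρ k)).toReal) :=
    (ENNReal.ofReal_le_ofReal (Real.negMulLog_sum_le _ fun _ _ => ENNReal.toReal_nonneg)).trans <|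
      Finset.le_sum_of_subadditive _ ENNReal.ofReal_zero.le (fun _ _ => ENNReal.ofReal_add_le) _ _
  rw [vnEntExt, hentropy, htrace,
    ENNReal.toReal_sum fun k _ => ne_top_of_le_ne_top ENNReal.one_ne_top (hρ1 k)]
  exact ENNReal.sum_sub_eq_sum_tsub_add_tsub _
    (fun k _ => ofReal_eta_traceWith_le_vnEnt b (hpos k) (hρ1 k))
    (ENNReal.sum_ne_top.mpr fun _ _ => ENNReal.ofReal_ne_top) hsubadd

/-- equality holds in H(∑_k ρ_k) ≤ ∑_k H(ρ_k) + S({Tr ρ_k}) if the supports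
of the positive operators ρ_k are mutually orthogonal (equivalently ρ_k ρ_j = 0 for k ≠ j). -/
theorem vnEntExt_sum_eq_of_orthogonal {A : Type*} [NormedAddCommGroup A]
    [InnerProductSpace ℂ A] [CompleteSpace A] (b : HilbertBasis ℕ ℂ A) {n : ℕ}
    (ρ : Fin n → (A →L[ℂ] A))
    (hρ : ∀ k, (ρ k).IsPositive) (hρ1 : ∀ k, traceWith b (ρ k) ≤ 1)
    (hsum : ∑ k, traceWith b (ρ k) ≤ 1)
    (horth : ∀ k j, k ≠ j → (ρ k) ∘L (ρ j) = 0) :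
    vnEntExt b (∑ k, ρ k) =
      ∑ k, vnEntExt b (ρ k) +
        ((∑ k, ENNReal.ofReal (eta ((traceWith b (ρ k)).toReal))) -
          ENNReal.ofReal (eta (∑ k, (traceWith b (ρ k)).toReal))) :=
  vnEntExt_sum_eq_of_orthogonal_general b ρ hρ hρ1 horth
end
end

section
/- Suppose there exists a sequence {h_k} of nonnegative numbers such that ∑_k h_k V_k*V_k is a bounded operator and ∑_k e^{−h_k} < +∞. Then the function φ ↦ S({‖V_k φ‖²}_k) is bounded on the unit sphere of H_A. -/
open scoped ENNReal
open ContinuousLinearMap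

noncomputable section

variable {E F : Type*} [NormedAddCommGroup E] [InnerProductSpace ℂ E] [CompleteSpace E]
  [NormedAddCommGroup F] [InnerProductSpace ℂ F] [CompleteSpace F]

/-!
The Legendre-type inequality `η(p) ≤ t p + e^{-t}` (for `p ≥ 0`, any real `t`) applied with
`p = ‖V_k φ‖²`, `t = h_k` and summed over `k` bounds the entropy by
`∑ h_k ‖V_k φ‖² + ∑ e^{-h_k} ≤ M + ∑ e^{-h_k}` on the unit sphere.
-/

open Real in
lemma eta_le_mul_add_exp_neg (t : ℝ) {p : ℝ} (hp : 0 ≤ p) : eta p ≤ t * p + exp (-t) := by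
  have hp' : 0 ≤ p * exp t := mul_nonneg hp (exp_pos t).le
  -- `η(p e^t) = e^t η(p) - t p e^t` and `η(x) ≤ 1 - x`
  have key := negMulLog_le_one_sub_self hp'
  rw [negMulLog_mul, show negMulLog (exp t) = -exp t * t by rw [negMulLog, log_exp]] at key
  rw [← mul_le_mul_iff_of_pos_left (exp_pos t), mul_add, ← exp_add, add_neg_cancel, exp_zero]
  change exp t * negMulLog p ≤ _
  linarith

lemma shEntExt_le_ofReal_tsum_mul_add_tsum_exp {p t : ℕ → ℝ} (hp : ∀ k, 0 ≤ p k)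
    (ht : ∀ k, 0 ≤ t k) (htp : Summable fun k => t k * p k)
    (hexp : Summable fun k => Real.exp (-t k)) :
    shEntExt p ≤ ENNReal.ofReal ((∑' k, t k * p k) + ∑' k, Real.exp (-t k)) := by
  have htp_nonneg : ∀ k, 0 ≤ t k * p k := fun k => mul_nonneg (ht k) (hp k)
  have hexp_nonneg : ∀ k, 0 ≤ Real.exp (-t k) := fun k => (Real.exp_pos _).le
  calc shEntExt p ≤ ∑' k, ENNReal.ofReal (eta (p k)) := tsub_le_self
    _ ≤ ∑' k, (ENNReal.ofReal (t k * p k) + ENNReal.ofReal (Real.exp (-t k))) :=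
        ENNReal.tsum_le_tsum fun k =>
          (ENNReal.ofReal_le_ofReal (eta_le_mul_add_exp_neg _ (hp k))).trans ENNReal.ofReal_add_le
    _ = ENNReal.ofReal (∑' k, t k * p k) + ENNReal.ofReal (∑' k, Real.exp (-t k)) := by
        rw [ENNReal.tsum_add, ENNReal.ofReal_tsum_of_nonneg htp_nonneg htp,
          ENNReal.ofReal_tsum_of_nonneg hexp_nonneg hexp]
    _ = ENNReal.ofReal ((∑' k, t k * p k) + ∑' k, Real.exp (-t k)) :=
        (ENNReal.ofReal_add (tsum_nonneg htp_nonneg) (tsum_nonneg hexp_nonneg)).symm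

theorem shEntExt_bounded_on_sphere_general {A B : Type*} [NormedAddCommGroup A]
    [InnerProductSpace ℂ A] [NormedAddCommGroup B]
    [InnerProductSpace ℂ B]
    (V : ℕ → (A →L[ℂ] B))
    (h : ℕ → ℝ) (hh : ∀ k, 0 ≤ h k)
    (M : ℝ)
    (hbddsum : ∀ x : A, Summable (fun k => h k * ‖V k x‖ ^ 2))
    (hbdd : ∀ x : A, (∑' k, h k * ‖V k x‖ ^ 2) ≤ M * ‖x‖ ^ 2)
    (hexp : Summable (fun k => Real.exp (-(h k)))) :
    ∃ C : ℝ, ∀ φ : A, ‖φ‖ = 1 →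
      shEntExt (fun k => ‖V k φ‖ ^ 2) ≤ ENNReal.ofReal C := by
  refine ⟨M + ∑' k, Real.exp (-(h k)), fun φ hφ => ?_⟩
  have hM : ∑' k, h k * ‖V k φ‖ ^ 2 ≤ M := by simpa [hφ] using hbdd φ
  calc shEntExt (fun k => ‖V k φ‖ ^ 2)
      ≤ ENNReal.ofReal ((∑' k, h k * ‖V k φ‖ ^ 2) + ∑' k, Real.exp (-(h k))) :=
        shEntExt_le_ofReal_tsum_mul_add_tsum_exp (fun k => sq_nonneg _) hh (hbddsum φ) hexp
    _ ≤ ENNReal.ofReal (M + ∑' k, Real.exp (-(h k))) := ENNReal.ofReal_le_ofReal (by linarith)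

/-- if there is a nonnegative sequence {h_k} with ∑_k h_k V_k*V_k bounded
(as a quadratic form) and ∑_k e^{−h_k} < ∞, then φ ↦ S({‖V_k φ‖²}_k) is bounded on the
unit sphere. -/
theorem shEntExt_bounded_on_sphere {A B : Type*} [NormedAddCommGroup A]
    [InnerProductSpace ℂ A] [CompleteSpace A] [NormedAddCommGroup B]
    [InnerProductSpace ℂ B] [CompleteSpace B]
    (V : ℕ → (A →L[ℂ] B))
    (hKsum : ∀ x : A, Summable (fun k => ‖V k x‖ ^ 2))
    (hK : ∀ x : A, (∑' k, ‖V k x‖ ^ 2) ≤ ‖x‖ ^ 2)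
    (h : ℕ → ℝ) (hh : ∀ k, 0 ≤ h k)
    (M : ℝ)
    (hbddsum : ∀ x : A, Summable (fun k => h k * ‖V k x‖ ^ 2))
    (hbdd : ∀ x : A, (∑' k, h k * ‖V k x‖ ^ 2) ≤ M * ‖x‖ ^ 2)
    (hexp : Summable (fun k => Real.exp (-(h k)))) :
    ∃ C : ℝ, ∀ φ : A, ‖φ‖ = 1 →
      shEntExt (fun k => ‖V k φ‖ ^ 2) ≤ ENNReal.ofReal C :=
  shEntExt_bounded_on_sphere_general V h hh M hbddsum hbdd hexp
end
end

section
/- The extended Shannon entropy S is bounded on the set of vectors {p_k} in the positive part of the unit ball of ℓ¹ satisfying ∑_k h_k p_k ≤ C, for any fixed C > 0 and any nonnegative sequence {h_k} with ∑_k e^{−h_k} < +∞. -/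
/-!
Young's inequality for the entropy function, `η(x) ≤ t x + e^{-t-1}` (the Legendre dual of `η`
is `t ↦ e^{-t-1}`), applied with `t = h_k` and summed over `k`, gives
`∑ η(p_k) ≤ ∑ h_k p_k + e⁻¹ ∑ e^{-h_k} ≤ C + e⁻¹ ∑ e^{-h_k}`.
-/

open scoped ENNReal
open ContinuousLinearMap

noncomputable section

variable {E F : Type*} [NormedAddCommGroup E] [InnerProductSpace ℂ E] [CompleteSpace E]
  [NormedAddCommGroup F] [InnerProductSpace ℂ F] [CompleteSpace F]

theorem eta_le_mul_add_exp (t : ℝ) {x : ℝ} (hx : 0 ≤ x) : eta x ≤ t * x + Real.exp (-t - 1) := by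
  rcases hx.eq_or_lt with rfl | hx
  · simp only [eta, mul_zero, neg_zero, zero_mul, zero_add]; positivity
  -- `1 + u ≤ eᵘ` at `u = -t - 1 - log x`, multiplied by `x`
  have key := mul_le_mul_of_nonneg_left (Real.add_one_le_exp (-t - 1 - Real.log x)) hx.le
  rw [Real.exp_sub, Real.exp_log hx, mul_div_cancel₀ _ hx.ne'] at key
  unfold eta
  linarith

theorem shEntExt_le_ofReal_tsum {p f : ℕ → ℝ} (hf : Summable f) (hf₀ : ∀ k, 0 ≤ f k)
    (hpf : ∀ k, eta (p k) ≤ f k) : shEntExt p ≤ ENNReal.ofReal (∑' k, f k) :=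
  calc shEntExt p ≤ ∑' k, ENNReal.ofReal (eta (p k)) := tsub_le_self
    _ ≤ ∑' k, ENNReal.ofReal (f k) := ENNReal.tsum_le_tsum fun k => ENNReal.ofReal_le_ofReal (hpf k)
    _ = ENNReal.ofReal (∑' k, f k) := (ENNReal.ofReal_tsum_of_nonneg hf₀ hf).symm

theorem shEntExt_bounded_of_energy_constraint_general (h : ℕ → ℝ) (hh : ∀ k, 0 ≤ h k)
    (hexp : Summable (fun k => Real.exp (-(h k)))) (C : ℝ) :
    ∃ B : ℝ, ∀ p : ℕ → ℝ, (∀ k, 0 ≤ p k) → Summable p → (∑' k, p k) ≤ 1 →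
      Summable (fun k => h k * p k) → (∑' k, h k * p k) ≤ C →
      shEntExt p ≤ ENNReal.ofReal B := by
  have hexp' : Summable fun k => Real.exp (-(h k) - 1) := by
    simpa only [Real.exp_sub] using hexp.div_const (Real.exp 1)
  refine ⟨C + ∑' k, Real.exp (-(h k) - 1), fun p hp _ _ hhp hhpC => ?_⟩
  calc shEntExt p ≤ ENNReal.ofReal (∑' k, (h k * p k + Real.exp (-(h k) - 1))) :=
        shEntExt_le_ofReal_tsum (hhp.add hexp')
          (fun k => add_nonneg (mul_nonneg (hh k) (hp k)) (Real.exp_nonneg _))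
          (fun k => eta_le_mul_add_exp (h k) (hp k))
    _ ≤ ENNReal.ofReal (C + ∑' k, Real.exp (-(h k) - 1)) := by
        rw [hhp.tsum_add hexp']
        gcongr

/-- the extended Shannon entropy is bounded on the set of vectors {p_k} in the
positive part of the unit ball of ℓ¹ with ∑_k h_k p_k ≤ C, whenever h_k ≥ 0 and
∑_k e^{−h_k} < ∞. -/
theorem shEntExt_bounded_of_energy_constraint (h : ℕ → ℝ) (hh : ∀ k, 0 ≤ h k)
    (hexp : Summable (fun k => Real.exp (-(h k)))) (C : ℝ) (hC : 0 < C) :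
    ∃ B : ℝ, ∀ p : ℕ → ℝ, (∀ k, 0 ≤ p k) → Summable p → (∑' k, p k) ≤ 1 →
      Summable (fun k => h k * p k) → (∑' k, h k * p k) ≤ C →
      shEntExt p ≤ ENNReal.ofReal B :=
  shEntExt_bounded_of_energy_constraint_general h hh hexp C
end
end

section
/- For the ℓ-mode quantum oscillator Hamiltonian with frequencies ω_1,…,ω_ℓ, the function F̄_{ℓ,ω}(E) = ℓ ln((E+2E₀)/(ℓE_*)) + ℓ, with E_* = (∏_i ℏω_i)^{1/ℓ} and E₀ = ½∑_i ℏω_i, is an upper bound on the maximal entropy F̄(E) = sup{H(ρ) : Tr H_A ρ ≤ E + E₀} of states with mean energy at most E + E₀, and the function E ↦ F̄_{ℓ,ω}(E)/√E is nonincreasing on the region where F̄_{ℓ,ω} ≥ 0. -/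
open scoped ENNReal
open ContinuousLinearMap

noncomputable section

variable {E F : Type*} [NormedAddCommGroup E] [InnerProductSpace ℂ E] [CompleteSpace E]
  [NormedAddCommGroup F] [InnerProductSpace ℂ F] [CompleteSpace F]

/-- The mean energy Tr H_A ρ of a state ρ, for a Hamiltonian diagonal in the Hilbert basis b
with eigenvalues Ek (formula Tr H_A ρ = ∑_k E_k ⟨e_k, ρ e_k⟩, with values in [0,∞]). -/
def energyWith {ι : Type*} (b : HilbertBasis ι ℂ E) (Ek : ι → ℝ) (ρ : E →L[ℂ] E) : ℝ≥0∞ :=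
  ∑' k, ENNReal.ofReal (Ek k * ((inner ℂ (b k) (ρ (b k)) : ℂ)).re)

/-- F_{H_A}(E) = sup { H(ρ) : Tr H_A ρ ≤ E }, the maximal entropy of states with mean
energy not exceeding E. -/
def maxEntAt {ι : Type*} (b : HilbertBasis ι ℂ E) (Ek : ι → ℝ) (En : ℝ) : ℝ≥0∞ :=
  ⨆ ρ : {ρ : E →L[ℂ] E // IsState b ρ ∧ energyWith b Ek ρ ≤ ENNReal.ofReal En},
    vnEnt b ρ.1
/-!
In the eigenbasis `e_k` of the Hamiltonian, the diagonal `p_k = ⟨e_k, ρ e_k⟩` of a state is a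
probability distribution with the same mean energy, and `H(ρ) ≤ ∑ η(p_k)` because `η` lies below
each of its tangent lines. Gibbs' inequality `∑ η(p_k) ≤ β⟨E⟩ + log Z` holds for any `Z` bounding
the partition function `∏ (2 sinh (βℏω_i/2))⁻¹` from above, e.g. `Z = ∏ (βℏω_i)⁻¹`; the choice
`β = ℓ / (E + E₀)` gives the bound. The monotonicity of `F̄ / √E` is a derivative computation that
needs only `ℓ E_* ≤ 2 E₀` (AM–GM).
-/

theorem eta_le_tangent {p w : ℝ} (hp : 0 ≤ p) (hw : 0 < w) :
    eta p ≤ -Real.log w * p - p + w := by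
  have hsplit : eta p = -Real.log w * p + w * Real.negMulLog (p / w) := by
    rw [show eta p = Real.negMulLog (w * (p / w)) by rw [mul_div_cancel₀ _ hw.ne']; rfl,
      Real.negMulLog_mul, Real.negMulLog]
    field_simp
  have h := mul_le_mul_of_nonneg_left
    (Real.negMulLog_le_one_sub_self (div_nonneg hp hw.le)) hw.le
  rw [mul_one_sub, mul_div_cancel₀ _ hw.ne'] at h
  linarith

theorem re_inner_cfc_le_of_le_affine {ρ : E →L[ℂ] E} (hρ : IsSelfAdjoint ρ) {f : ℝ → ℝ}
    (hf : ContinuousOn f (spectrum ℝ ρ)) {a c : ℝ} (hfa : ∀ t ∈ spectrum ℝ ρ, f t ≤ a * t + c)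
    (x : E) : (inner ℂ x (cfc f ρ x)).re ≤ a * (inner ℂ x (ρ x)).re + c * ‖x‖ ^ 2 := by
  have hcfc : cfc (fun t => a * t + c) ρ = a • ρ + c • 1 := by
    rw [cfc_add .., cfc_const_mul .., cfc_id' ℝ ρ, cfc_const c ρ, Algebra.algebraMap_eq_smul_one]
  have hle := cfc_mono hfa hf
  rw [hcfc, le_def] at hle
  have h := hle.re_inner_nonneg_right x
  simp only [sub_apply, add_apply, smul_apply, inner_sub_right, inner_add_right,
    ← Complex.coe_smul, inner_smul_right, map_sub, map_add] at h
  simpa [← Complex.ofReal_pow] using h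

theorem re_inner_cfc_eta_le {ρ : E →L[ℂ] E} (hρ : ρ.IsPositive) {x : E} (hx : ‖x‖ = 1) :
    (inner ℂ x (cfc eta ρ x)).re ≤ eta (inner ℂ x (ρ x)).re := by
  set p := (inner ℂ x (ρ x)).re
  have tangent : ∀ w, 0 < w → (inner ℂ x (cfc eta ρ x)).re ≤ -Real.log w * p - p + w := by
    intro w hw
    have hspec : ∀ t ∈ spectrum ℝ ρ, eta t ≤ (-Real.log w - 1) * t + w := fun t ht =>
      (eta_le_tangent (spectrum_nonneg_of_nonneg ((nonneg_iff_isPositive ρ).mpr hρ) ht)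
        hw).trans_eq (by ring)
    have := re_inner_cfc_le_of_le_affine (f := eta) hρ.isSelfAdjoint
      Real.continuous_negMulLog.continuousOn hspec x
    rw [hx] at this
    linarith
  have hp : 0 ≤ p := hρ.re_inner_nonneg_right x
  rcases hp.eq_or_lt with hp0 | hpos
  · refine le_of_forall_pos_le_add fun ε hε => ?_
    simpa [eta, ← hp0] using tangent ε hε
  · exact (tangent p hpos).trans_eq (by rw [eta]; ring)

theorem vnEnt_le_tsum_eta_re_inner {ι : Type*} (b : HilbertBasis ι ℂ E) {ρ : E →L[ℂ] E}
    (hρ : ρ.IsPositive) :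
    vnEnt b ρ ≤ ∑' k, ENNReal.ofReal (eta (inner ℂ (b k) (ρ (b k))).re) :=
  ENNReal.tsum_le_tsum fun k =>
    ENNReal.ofReal_le_ofReal (re_inner_cfc_eta_le hρ (b.orthonormal.1 k))

theorem summable_and_tsum_le_of_tsum_ofReal_le {ι : Type*} {f : ι → ℝ} (hf : ∀ k, 0 ≤ f k)
    {a : ℝ} (ha : 0 ≤ a) (h : ∑' k, ENNReal.ofReal (f k) ≤ ENNReal.ofReal a) :
    Summable f ∧ ∑' k, f k ≤ a := by
  have hs : Summable f := by
    simpa [ENNReal.toReal_ofReal (hf _)] using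
      ENNReal.summable_toReal (ne_top_of_le_ne_top ENNReal.ofReal_ne_top h)
  refine ⟨hs, (ENNReal.ofReal_le_ofReal_iff ha).mp ?_⟩
  rwa [ENNReal.ofReal_tsum_of_nonneg hf hs]

theorem hasSum_of_tsum_ofReal_eq_one {ι : Type*} {f : ι → ℝ} (hf : ∀ k, 0 ≤ f k)
    (h : ∑' k, ENNReal.ofReal (f k) = 1) : HasSum f 1 := by
  have hs := (summable_and_tsum_le_of_tsum_ofReal_le hf zero_le_one
    (h.trans ENNReal.ofReal_one.symm).le).1
  rw [← ENNReal.ofReal_tsum_of_nonneg hf hs, ENNReal.ofReal_eq_one] at h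
  exact h ▸ hs.hasSum

theorem tsum_ofReal_eta_le_of_partition_le {ι : Type*} {p Ek : ι → ℝ} {β Z Et : ℝ}
    (hp : ∀ k, 0 ≤ p k) (hp1 : ∑' k, ENNReal.ofReal (p k) = 1) (hE : ∀ k, 0 ≤ Ek k)
    (hEt : 0 ≤ Et) (hmean : ∑' k, ENNReal.ofReal (Ek k * p k) ≤ ENNReal.ofReal Et)
    (hβ : 0 ≤ β) (hZ : 0 < Z)
    (hpart : ∑' k, ENNReal.ofReal (Real.exp (-(β * Ek k))) ≤ ENNReal.ofReal Z) :
    ∑' k, ENNReal.ofReal (eta (p k)) ≤ ENNReal.ofReal (β * Et + Real.log Z) := by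
  have hps := hasSum_of_tsum_ofReal_eq_one hp hp1
  obtain ⟨hEs, hEle⟩ :=
    summable_and_tsum_le_of_tsum_ofReal_le (fun k => mul_nonneg (hE k) (hp k)) hEt hmean
  obtain ⟨hws, hwle⟩ := summable_and_tsum_le_of_tsum_ofReal_le (fun k => (Real.exp_pos _).le)
    hZ.le hpart
  set f : ι → ℝ := fun k =>
    β * (Ek k * p k) + (Real.log Z - 1) * p k + Real.exp (-(β * Ek k)) / Z
  have hηf : ∀ k, eta (p k) ≤ f k := fun k => by
    have hlog : Real.log (Real.exp (-(β * Ek k)) / Z) = -(β * Ek k) - Real.log Z := by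
      rw [Real.log_div (Real.exp_pos _).ne' hZ.ne', Real.log_exp]
    have := eta_le_tangent (hp k) (div_pos (Real.exp_pos (-(β * Ek k))) hZ)
    rw [hlog] at this
    linarith
  have hf : HasSum f (β * ∑' k, Ek k * p k + (Real.log Z - 1) * 1 +
      (∑' k, Real.exp (-(β * Ek k))) / Z) :=
    ((hEs.hasSum.mul_left β).add (hps.mul_left _)).add (hws.hasSum.div_const Z)
  have hfsum : ∑' k, f k ≤ β * Et + Real.log Z := by
    have : (∑' k, Real.exp (-(β * Ek k))) / Z ≤ 1 := (div_le_one hZ).mpr hwle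
    rw [hf.tsum_eq]
    nlinarith
  calc ∑' k, ENNReal.ofReal (eta (p k)) ≤ ∑' k, ENNReal.ofReal (f k) :=
        ENNReal.tsum_le_tsum fun k => ENNReal.ofReal_le_ofReal (hηf k)
    _ = ENNReal.ofReal (∑' k, f k) := (ENNReal.ofReal_tsum_of_nonneg
        (fun k => (Real.negMulLog_nonneg (hp k) (le_hasSum hps k fun j _ => hp j)).trans
          (hηf k)) hf.summable).symm
    _ ≤ ENNReal.ofReal (β * Et + Real.log Z) := ENNReal.ofReal_le_ofReal hfsum

theorem ENNReal.tsum_fin_pi_prod {α : Type*} {L : ℕ} (f : Fin L → α → ℝ≥0∞) :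
    ∑' n : Fin L → α, ∏ i, f i (n i) = ∏ i, ∑' a, f i a := by
  induction L with
  | zero => simp
  | succ L ih =>
    rw [← (Fin.consEquiv fun _ => α).tsum_eq, ENNReal.tsum_prod', Fin.prod_univ_succ]
    simp only [Fin.consEquiv_apply, Fin.prod_univ_succ, Fin.cons_zero, Fin.cons_succ,
      ENNReal.tsum_mul_left, ih, ENNReal.tsum_mul_right]

theorem hasSum_exp_neg_mul_add_half {x : ℝ} (hx : 0 < x) :
    HasSum (fun n : ℕ => Real.exp (-(x * (n + 1 / 2)))) (2 * Real.sinh (x / 2))⁻¹ := by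
  have hgeom := (hasSum_geometric_of_lt_one (Real.exp_pos (-x)).le
    (Real.exp_lt_one_iff.mpr (neg_neg_of_pos hx))).mul_left (Real.exp (-(x / 2)))
  have hterm : (fun n : ℕ => Real.exp (-(x * (n + 1 / 2)))) =
      fun n => Real.exp (-(x / 2)) * Real.exp (-x) ^ n := funext fun n => by
    rw [← Real.exp_nat_mul, ← Real.exp_add]
    ring_nf
  have hsum : (2 * Real.sinh (x / 2))⁻¹ = Real.exp (-(x / 2)) * (1 - Real.exp (-x))⁻¹ := by
    have hsq : Real.exp (-x) = Real.exp (-(x / 2)) ^ 2 := by rw [← Real.exp_nat_mul]; ring_nf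
    have hu : Real.exp (-(x / 2)) < 1 := Real.exp_lt_one_iff.mpr (by linarith)
    have hu0 := Real.exp_pos (-(x / 2))
    have hinv : Real.exp (x / 2) = (Real.exp (-(x / 2)))⁻¹ := by rw [Real.exp_neg, inv_inv]
    rw [Real.sinh_eq, hsq, hinv]
    have : 1 - Real.exp (-(x / 2)) ^ 2 ≠ 0 := by nlinarith
    field_simp
  rwa [hterm, hsum]

theorem tsum_ofReal_exp_neg_mul_add_half_le {x : ℝ} (hx : 0 < x) :
    ∑' n : ℕ, ENNReal.ofReal (Real.exp (-(x * (n + 1 / 2)))) ≤ ENNReal.ofReal x⁻¹ := by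
  have h := hasSum_exp_neg_mul_add_half hx
  rw [← ENNReal.ofReal_tsum_of_nonneg (fun _ => (Real.exp_pos _).le) h.summable, h.tsum_eq]
  refine ENNReal.ofReal_le_ofReal (inv_anti₀ hx ?_)
  linarith [Real.self_le_sinh_iff.mpr (half_pos hx).le]

def oscillatorEnergy {L : ℕ} (c : Fin L → ℝ) (n : Fin L → ℕ) : ℝ :=
  1 / 2 * ∑ i, c i + ∑ i, (n i : ℝ) * c i

theorem oscillatorEnergy_nonneg {L : ℕ} {c : Fin L → ℝ} (hc : ∀ i, 0 ≤ c i) (n : Fin L → ℕ) :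
    0 ≤ oscillatorEnergy c n :=
  add_nonneg (mul_nonneg (by norm_num) (Finset.sum_nonneg fun i _ => hc i))
    (Finset.sum_nonneg fun i _ => mul_nonneg (n i).cast_nonneg (hc i))

theorem tsum_ofReal_exp_neg_oscillatorEnergy_le {L : ℕ} {c : Fin L → ℝ} (hc : ∀ i, 0 < c i)
    {β : ℝ} (hβ : 0 < β) :
    ∑' n, ENNReal.ofReal (Real.exp (-(β * oscillatorEnergy c n))) ≤
      ENNReal.ofReal (∏ i, (β * c i)⁻¹) := by
  have hsplit : ∀ n, ENNReal.ofReal (Real.exp (-(β * oscillatorEnergy c n))) =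
      ∏ i, ENNReal.ofReal (Real.exp (-(β * c i * (n i + 1 / 2)))) := fun n => by
    have hE : oscillatorEnergy c n = ∑ i, c i * (n i + 1 / 2) := by
      simp only [oscillatorEnergy, Finset.mul_sum, ← Finset.sum_add_distrib]
      exact Finset.sum_congr rfl fun i _ => by ring
    rw [hE, Finset.mul_sum, ← Finset.sum_neg_distrib, Real.exp_sum,
      ENNReal.ofReal_prod_of_nonneg fun i _ => (Real.exp_pos _).le]
    simp only [mul_assoc]
  rw [tsum_congr hsplit, ENNReal.tsum_fin_pi_prod fun i (k : ℕ) =>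
    ENNReal.ofReal (Real.exp (-(β * c i * (k + 1 / 2))))]
  rw [ENNReal.ofReal_prod_of_nonneg fun i _ => (inv_pos.mpr (mul_pos hβ (hc i))).le]
  exact Finset.prod_le_prod' fun i _ => tsum_ofReal_exp_neg_mul_add_half_le (mul_pos hβ (hc i))

theorem maxEntAt_oscillatorEnergy_le {L : ℕ} (hL : 0 < L) (b : HilbertBasis (Fin L → ℕ) ℂ E)
    {c : Fin L → ℝ} (hc : ∀ i, 0 < c i) {Et : ℝ} (hEt : 0 < Et) :
    maxEntAt b (oscillatorEnergy c) Et ≤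
      ENNReal.ofReal (L * Real.log (Et / (L * (∏ i, c i) ^ ((1 : ℝ) / L))) + L) := by
  refine iSup_le fun ⟨ρ, ⟨hρ, htr⟩, hmean⟩ => ?_
  have hL0 : (0 : ℝ) < L := Nat.cast_pos.mpr hL
  have hP : 0 < ∏ i, c i := Finset.prod_pos fun i _ => hc i
  set β : ℝ := L / Et with hβ_def
  have hβ : 0 < β := div_pos hL0 hEt
  have hZ : 0 < ∏ i, (β * c i)⁻¹ := Finset.prod_pos fun i _ => inv_pos.mpr (mul_pos hβ (hc i))
  have hlogZ : Real.log (∏ i, (β * c i)⁻¹) =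
      L * Real.log (Et / (L * (∏ i, c i) ^ ((1 : ℝ) / L))) := by
    rw [Finset.prod_inv_distrib, Real.log_inv, Finset.prod_mul_distrib, Finset.prod_const,
      Finset.card_univ, Fintype.card_fin, Real.log_mul (by positivity) hP.ne', Real.log_pow,
      Real.log_div hEt.ne' (by positivity), Real.log_mul hL0.ne' (by positivity),
      Real.log_rpow hP, hβ_def, Real.log_div hL0.ne' hEt.ne']
    field_simp
    ring
  calc vnEnt b ρ ≤ ∑' k, ENNReal.ofReal (eta (inner ℂ (b k) (ρ (b k))).re) :=
        vnEnt_le_tsum_eta_re_inner b hρ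
    _ ≤ ENNReal.ofReal (β * Et + Real.log (∏ i, (β * c i)⁻¹)) :=
        tsum_ofReal_eta_le_of_partition_le (fun k => hρ.re_inner_nonneg_right (b k)) htr
          (oscillatorEnergy_nonneg fun i => (hc i).le) hEt.le hmean hβ.le hZ
          (tsum_ofReal_exp_neg_oscillatorEnergy_le hc hβ)
    _ = _ := by rw [hlogZ, hβ_def, div_mul_cancel₀ _ hEt.ne', add_comm]

theorem card_mul_prod_rpow_inv_card_le_sum {ι : Type*} [Fintype ι] [Nonempty ι] {z : ι → ℝ}
    (hz : ∀ i, 0 ≤ z i) :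
    (Fintype.card ι : ℝ) * (∏ i, z i) ^ ((1 : ℝ) / Fintype.card ι) ≤ ∑ i, z i := by
  have hcard : (0 : ℝ) < Fintype.card ι := Nat.cast_pos.mpr Fintype.card_pos
  have h := Real.geom_mean_le_arith_mean Finset.univ (fun _ => 1) z (fun _ _ => zero_le_one)
    (by simpa using hcard) fun i _ => hz i
  simp only [Real.rpow_one, Finset.sum_const, Finset.card_univ, nsmul_eq_mul, mul_one,
    one_mul] at h
  rw [one_div, mul_comm]
  exact (le_div_iff₀ hcard).mp h

theorem antitoneOn_mul_log_add_div_sqrt {a c S : ℝ} (ha : 0 ≤ a) (hc : 0 < c) (hcS : c ≤ S) :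
    AntitoneOn (fun x => (a * Real.log ((x + S) / c) + a) / Real.sqrt x) (Set.Ioi 0) := by
  have hderiv : ∀ x ∈ Set.Ioi (0 : ℝ), HasDerivAt
      (fun x => (a * Real.log ((x + S) / c) + a) / Real.sqrt x)
      ((a * (1 / (x + S)) * Real.sqrt x - (a * Real.log ((x + S) / c) + a) *
        (1 / (2 * Real.sqrt x))) / Real.sqrt x ^ 2) x := fun x (hx : 0 < x) => by
    have hlog : HasDerivAt (fun x => Real.log ((x + S) / c)) (1 / (x + S)) x := by
      convert (((hasDerivAt_id' x).add_const S).div_const c).log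
        (div_pos (by linarith) hc).ne' using 1
      field_simp
    exact ((hlog.const_mul a).add_const a).div (Real.hasDerivAt_sqrt hx.ne')
      (Real.sqrt_pos.mpr hx).ne'
  refine antitoneOn_of_deriv_nonpos (convex_Ioi 0)
    (fun x hx => (hderiv x hx).continuousAt.continuousWithinAt) ?_ ?_
  · rw [interior_Ioi]
    exact fun x hx => (hderiv x hx).differentiableAt.differentiableWithinAt
  rw [interior_Ioi]
  intro x (hx : 0 < x)
  rw [(hderiv x hx).deriv]
  refine div_nonpos_of_nonpos_of_nonneg (sub_nonpos.mpr ?_) (sq_nonneg _)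
  have hxS : 0 < x + S := by linarith
  have hsx : 0 < Real.sqrt x := Real.sqrt_pos.mpr hx
  have key : 2 * (x / (x + S)) ≤ Real.log ((x + S) / c) + 1 := by
    have hlogS := Real.one_sub_inv_le_log_of_pos (div_pos hxS (hc.trans_le hcS))
    have hlog_mono : Real.log ((x + S) / S) ≤ Real.log ((x + S) / c) :=
      Real.log_le_log (div_pos hxS (hc.trans_le hcS)) (div_le_div_of_nonneg_left hxS.le hc hcS)
    have hfrac : 1 - ((x + S) / S)⁻¹ = x / (x + S) := by
      field_simp
      ring
    have hfrac_le : x / (x + S) ≤ 1 := (div_le_one hxS).mpr (by linarith)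
    linarith
  rw [mul_one_div _ (2 * _), le_div_iff₀ (by positivity)]
  calc a * (1 / (x + S)) * Real.sqrt x * (2 * Real.sqrt x)
      = a * (2 * (Real.sqrt x * Real.sqrt x / (x + S))) := by ring
    _ = a * (2 * (x / (x + S))) := by rw [Real.mul_self_sqrt hx.le]
    _ ≤ a * (Real.log ((x + S) / c) + 1) := mul_le_mul_of_nonneg_left key ha
    _ = a * Real.log ((x + S) / c) + a := by ring

/-- for the ℓ-mode quantum oscillator with frequencies ω_i (Hamiltonian
diagonal in a Hilbert basis indexed by multi-indices n : Fin ℓ → ℕ, with eigenvalues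
E₀ + ∑_i n_i ℏω_i), the function F̄_{ℓ,ω}(E) = ℓ ln((E+2E₀)/(ℓE_*)) + ℓ with
E_* = (∏_i ℏω_i)^{1/ℓ} is an upper bound on the maximal entropy F̄(E) of states with mean
energy at most E + E₀, and E ↦ F̄_{ℓ,ω}(E)/√E is nonincreasing where F̄_{ℓ,ω} ≥ 0. -/
theorem oscillator_entropy_upper_bound {A : Type*} [NormedAddCommGroup A]
    [InnerProductSpace ℂ A] [CompleteSpace A] {ℓ : ℕ} (hl : 0 < ℓ)
    (b : HilbertBasis (Fin ℓ → ℕ) ℂ A)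
    (hbar : ℝ) (hhbar : 0 < hbar) (ω : Fin ℓ → ℝ) (hω : ∀ i, 0 < ω i) :
    (∀ En : ℝ, 0 ≤ En →
      maxEntAt b
        (fun n : Fin ℓ → ℕ =>
          (1 / 2) * ∑ i, hbar * ω i + ∑ i, (n i : ℝ) * (hbar * ω i))
        (En + (1 / 2) * ∑ i, hbar * ω i) ≤
      ENNReal.ofReal ((ℓ : ℝ) *
        Real.log ((En + ∑ i, hbar * ω i) / (ℓ * (∏ i, hbar * ω i) ^ ((1 : ℝ) / ℓ))) + ℓ)) ∧
    AntitoneOn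
      (fun En => ((ℓ : ℝ) *
        Real.log ((En + ∑ i, hbar * ω i) / (ℓ * (∏ i, hbar * ω i) ^ ((1 : ℝ) / ℓ))) + ℓ) /
        Real.sqrt En)
      {En : ℝ | 0 < En ∧ 0 ≤ (ℓ : ℝ) *
        Real.log ((En + ∑ i, hbar * ω i) / (ℓ * (∏ i, hbar * ω i) ^ ((1 : ℝ) / ℓ))) + ℓ} := by
  have hc : ∀ i, 0 < hbar * ω i := fun i => mul_pos hhbar (hω i)
  have : Nonempty (Fin ℓ) := ⟨⟨0, hl⟩⟩
  have hS : 0 < ∑ i, hbar * ω i := Finset.sum_pos (fun i _ => hc i) Finset.univ_nonempty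
  have hP : 0 < ∏ i, hbar * ω i := Finset.prod_pos fun i _ => hc i
  refine ⟨fun En hEn => ?_, ?_⟩
  · refine (maxEntAt_oscillatorEnergy_le hl b hc (by positivity)).trans
      (ENNReal.ofReal_le_ofReal ?_)
    gcongr
    linarith
  · have hAMGM := card_mul_prod_rpow_inv_card_le_sum fun i : Fin ℓ => (hc i).le
    rw [Fintype.card_fin] at hAMGM
    exact (antitoneOn_mul_log_add_div_sqrt ℓ.cast_nonneg (by positivity) hAMGM).mono
      fun x hx => hx.1
end
end
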